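/- Continuous closed irreducible surjections preserve s-m₁-spaces: if f : X → Y is a continuous, closed, irreducible surjection and X is an s-m₁-space, then Y is an s-m₁-space. -/

import Mathlib

/-!
For `V ⊆ X` let `kernImage f V = {y | f ⁻¹' {y} ⊆ V}` be the small image of `V`. If `f` is
closed it sends open sets to open sets, and if `f` is moreover irreducible, every nonempty open
set has nonempty small image, which forces `closure (kernImage f V) = f '' closure V` for open
`V`. Hence the small images of a closure-preserving open base at `f ⁻¹' G` form a
closure-preserving open base at `G`.
-/

open Set Topology Cardinal

universe u

/-- A family of sets is closure-preserving if the closure of the union of any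
subfamily equals the union of the closures. -/
def ClosurePreserving {X : Type*} [TopologicalSpace X] (P : Set (Set X)) : Prop :=
  ∀ P' ⊆ P, closure (⋃₀ P') = ⋃ B ∈ P', closure B

/-- A family of open sets is a neighborhood base at the set `F`. -/
def IsNbhdBaseAt {X : Type*} [TopologicalSpace X] (B : Set (Set X)) (F : Set X) : Prop :=
  (∀ V ∈ B, IsOpen V ∧ F ⊆ V) ∧ ∀ U : Set X, IsOpen U → F ⊆ U → ∃ V ∈ B, V ⊆ U

/-- `X` is s-m₁: every closed set has a closure-preserving open neighborhood base. -/
def SM1 (X : Type*) [TopologicalSpace X] : Prop :=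
  ∀ F : Set X, IsClosed F → ∃ B : Set (Set X), IsNbhdBaseAt B F ∧ ClosurePreserving B

/-- `X` is m₁ at `x`: there is a closure-preserving local base of open sets at `x`. -/
def M1At {X : Type*} [TopologicalSpace X] (x : X) : Prop :=
  ∃ B : Set (Set X), (∀ V ∈ B, IsOpen V ∧ x ∈ V) ∧
    (∀ U : Set X, IsOpen U → x ∈ U → ∃ V ∈ B, V ⊆ U) ∧ ClosurePreserving B

section

variable {X Y : Type*} {f : X → Y}

theorem Function.Surjective.kernImage_subset_image (hs : Function.Surjective f) (S : Set X) :
    kernImage f S ⊆ f '' S := fun y hy =>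
  let ⟨x, hx⟩ := hs y
  ⟨x, hy hx, hx⟩

theorem Function.Surjective.kernImage_preimage (hs : Function.Surjective f) (W : Set Y) :
    kernImage f (f ⁻¹' W) = W :=
  kernImage_preimage_eq_iff.2 (by simp [hs.range_eq])

variable [TopologicalSpace X]

theorem closurePreserving_of_closure_sUnion_subset {P : Set (Set X)}
    (h : ∀ P' ⊆ P, closure (⋃₀ P') ⊆ ⋃ B ∈ P', closure B) : ClosurePreserving P :=
  fun P' hP' =>
    (h P' hP').antisymm (iUnion₂_subset fun _ hB => closure_mono (subset_sUnion_of_mem hB))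

def IsIrreducibleMap (f : X → Y) : Prop :=
  ∀ F : Set X, IsClosed F → F ≠ Set.univ → f '' F ≠ Set.univ

theorem IsIrreducibleMap.kernImage_nonempty (hirr : IsIrreducibleMap f) {U : Set X}
    (hU : IsOpen U) (hne : U.Nonempty) : (kernImage f U).Nonempty := by
  rw [kernImage_eq_compl, nonempty_compl]
  exact hirr Uᶜ hU.isClosed_compl fun h => hne.ne_empty (compl_univ_iff.1 h)

variable [TopologicalSpace Y]

theorem IsIrreducibleMap.closure_kernImage (hirr : IsIrreducibleMap f) (hc : Continuous f)
    (hs : Function.Surjective f) (hcl : IsClosedMap f) {U : Set X} (hU : IsOpen U) :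
    closure (kernImage f U) = f '' closure U := by
  refine (closure_minimal ?_ (hcl _ isClosed_closure)).antisymm ?_
  · exact (hs.kernImage_subset_image U).trans (image_mono subset_closure)
  rintro _ ⟨x, hx, rfl⟩
  refine mem_closure_iff.2 fun W hW hxW => ?_
  have hWU : (f ⁻¹' W ∩ U).Nonempty := mem_closure_iff.1 hx _ (hW.preimage hc) hxW
  exact (hirr.kernImage_nonempty ((hW.preimage hc).inter hU) hWU).mono fun y hy =>
    ⟨hs.kernImage_preimage W ▸ kernImage_mono inter_subset_left hy,
      kernImage_mono inter_subset_right hy⟩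

theorem IsNbhdBaseAt.kernImage (hc : Continuous f) (hs : Function.Surjective f)
    (hcl : IsClosedMap f) {B : Set (Set X)} {G : Set Y} (hB : IsNbhdBaseAt B (f ⁻¹' G)) :
    IsNbhdBaseAt (kernImage f '' B) G := by
  refine ⟨?_, fun U hU hGU => ?_⟩
  · rintro _ ⟨V, hV, rfl⟩
    exact ⟨isClosedMap_iff_kernImage.1 hcl (hB.1 V hV).1, subset_kernImage_iff.2 (hB.1 V hV).2⟩
  obtain ⟨V, hV, hVU⟩ := hB.2 _ (hU.preimage hc) (preimage_mono hGU)
  exact ⟨_, mem_image_of_mem _ hV, hs.kernImage_preimage U ▸ kernImage_mono hVU⟩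

theorem ClosurePreserving.kernImage (hirr : IsIrreducibleMap f) (hc : Continuous f)
    (hs : Function.Surjective f) (hcl : IsClosedMap f) {B : Set (Set X)}
    (hBo : ∀ V ∈ B, IsOpen V) (hB : ClosurePreserving B) :
    ClosurePreserving (kernImage f '' B) := by
  refine closurePreserving_of_closure_sUnion_subset fun P' hP' => ?_
  obtain ⟨Q, hQB, rfl⟩ := subset_image_iff.1 hP'
  have hclosure (V) (hV : V ∈ Q) := hirr.closure_kernImage hc hs hcl (hBo V (hQB hV))
  calc closure (⋃₀ (Set.kernImage f '' Q))
      ⊆ closure (Set.kernImage f (⋃₀ Q)) := by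
        rw [sUnion_image]
        exact closure_mono (iUnion₂_subset fun V hV => kernImage_mono (subset_sUnion_of_mem hV))
    _ = f '' closure (⋃₀ Q) :=
        hirr.closure_kernImage hc hs hcl (isOpen_sUnion fun V hV => hBo V (hQB hV))
    _ = ⋃ V ∈ Q, f '' closure V := by rw [hB Q hQB, image_iUnion₂]
    _ = ⋃ W ∈ Set.kernImage f '' Q, closure W := by
        rw [biUnion_image]
        exact iUnion₂_congr fun V hV => (hclosure V hV).symm

end

/-- Continuous closed irreducible surjections preserve s-m₁-spaces. -/
theorem closed_irreducible_preserves_sM1 {X Y : Type*}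
    [TopologicalSpace X] [TopologicalSpace Y] (f : X → Y)
    (hc : Continuous f) (hs : Function.Surjective f) (hcl : IsClosedMap f)
    (hirr : ∀ F : Set X, IsClosed F → F ≠ Set.univ → f '' F ≠ Set.univ)
    (h : SM1 X) : SM1 Y := by
  intro G hG
  obtain ⟨B, hB, hBcp⟩ := h (f ⁻¹' G) (hG.preimage hc)
  exact ⟨kernImage f '' B, hB.kernImage hc hs hcl,
    hBcp.kernImage hirr hc hs hcl fun V hV => (hB.1 V hV).1⟩
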